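/- For every natural number m, Σ_{n=0}^{m} B_n · S_1(m,n) = (−1)^m · m! / (m+1), where B_n are the Bernoulli numbers and S_1(m,n) are the (signed) Stirling numbers of the first kind. -/
import Mathlib

section
open Polynomial Finset

/-- Signed Stirling numbers of the first kind. -/
def S1 : ℕ → ℕ → ℚ
  | 0, 0 => 1
  | 0, _ + 1 => 0
  | n + 1, 0 => -(n : ℚ) * S1 n 0
  | n + 1, k + 1 => S1 n k - (n : ℚ) * S1 n (k + 1)

noncomputable def P (m : ℕ) : Polynomial ℚ := ∏ i ∈ Finset.range m, (X - C (i : ℚ))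

lemma P_succ (m : ℕ) : P (m + 1) = P m * (X - C (m : ℚ)) := Finset.prod_range_succ _ _

lemma coeff_P (m : ℕ) : ∀ n, (P m).coeff n = S1 m n := by
  induction m with
  | zero =>
    intro n
    cases n with
    | zero => simp [P, S1]
    | succ k => simp [P, S1, coeff_one, Nat.succ_ne_zero]
  | succ m ih =>
    intro n
    rw [P_succ]
    cases n with
    | zero =>
      rw [mul_coeff_zero]
      show (P m).coeff 0 * (X - C (m:ℚ)).coeff 0 = -(m : ℚ) * S1 m 0
      rw [ih 0]
      simp
      ring
    | succ k =>
      rw [coeff_mul_X_sub_C, ih, ih]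
      show S1 m k - S1 m (k + 1) * (m:ℚ) = S1 m k - (m : ℚ) * S1 m (k + 1)
      ring

lemma S1_eq_zero : ∀ m n, m < n → S1 m n = 0 := by
  intro m
  induction m with
  | zero => intro n hn; cases n with
    | zero => omega
    | succ k => rfl
  | succ m ih =>
    intro n hn
    cases n with
    | zero => omega
    | succ k =>
      show S1 m k - (m : ℚ) * S1 m (k+1) = 0
      rw [ih k (by omega), ih (k+1) (by omega)]
      ring

lemma S1_succ_zero (m : ℕ) : S1 (m + 1) 0 = 0 := by
  induction m with
  | zero => show -(0:ℚ) * S1 0 0 = 0; simp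
  | succ m ih => show -((m+1 : ℕ) : ℚ) * S1 (m+1) 0 = 0; rw [ih]; ring

lemma S1_succ_one (m : ℕ) : S1 (m + 1) 1 = (-1) ^ m * (Nat.factorial m : ℚ) := by
  induction m with
  | zero => show S1 0 0 - (0:ℚ) * S1 0 1 = _; simp [S1]
  | succ m ih =>
    show S1 (m+1) 0 - ((m+1 : ℕ) : ℚ) * S1 (m+1) 1 = _
    rw [S1_succ_zero, ih, Nat.factorial_succ]
    push_cast
    ring

noncomputable def L (p : Polynomial ℚ) : ℚ := p.sum fun n a => _root_.bernoulli n * a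

lemma L_add (p q : Polynomial ℚ) : L (p + q) = L p + L q :=
  Polynomial.sum_add_index p q _ (fun n => by simp) (fun n a b => by ring)

lemma L_zero : L 0 = 0 := Polynomial.sum_zero_index _

lemma L_monomial (n : ℕ) (a : ℚ) : L (monomial n a) = _root_.bernoulli n * a :=
  Polynomial.sum_monomial_index a _ (by simp)

lemma L_C_mul_pow (a : ℚ) (n : ℕ) : L (C a * X ^ n) = _root_.bernoulli n * a := by
  rw [Polynomial.C_mul_X_pow_eq_monomial, L_monomial]

lemma L_sum (s : Finset ℕ) (f : ℕ → Polynomial ℚ) :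
    L (∑ i ∈ s, f i) = ∑ i ∈ s, L (f i) :=
  map_sum (AddMonoidHom.mk' L L_add) f s

lemma L_C_mul (c : ℚ) (p : Polynomial ℚ) : L (C c * p) = c * L p := by
  conv_lhs => rw [p.as_sum_support, Finset.mul_sum]
  conv_rhs => rw [p.as_sum_support]
  rw [L_sum, L_sum, Finset.mul_sum]
  refine Finset.sum_congr rfl fun n _ => ?_
  rw [← Polynomial.C_mul_X_pow_eq_monomial, ← mul_assoc, ← C_mul, L_C_mul_pow, L_C_mul_pow]
  ring

lemma L_comp (p : Polynomial ℚ) : L (p.comp (X + 1)) = L p + p.coeff 1 := by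
  induction p using Polynomial.induction_on' with
  | add p q hp hq =>
    rw [add_comp, L_add, hp, hq, L_add, coeff_add]; ring
  | monomial n a =>
    rw [← Polynomial.C_mul_X_pow_eq_monomial, mul_comp, C_comp, X_pow_comp]
    rw [add_pow, Finset.mul_sum, L_sum]
    have key : ∀ k ∈ Finset.range (n + 1),
        L (C a * (X ^ k * (1:Polynomial ℚ) ^ (n - k) * (n.choose k : Polynomial ℚ))) =
          a * ((n.choose k : ℚ) * _root_.bernoulli k) := by
      intro k _
      rw [one_pow, mul_one]
      have : (n.choose k : Polynomial ℚ) = C ((n.choose k : ℚ)) := by simp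
      rw [this, mul_comm (X ^ k), ← mul_assoc, ← C_mul, L_C_mul_pow]
      ring
    rw [Finset.sum_congr rfl key, ← Finset.mul_sum]
    rw [Finset.sum_range_succ, _root_.sum_bernoulli]
    rw [L_C_mul_pow, coeff_C_mul, coeff_X_pow]
    simp only [Nat.choose_self, Nat.cast_one, one_mul]
    rcases eq_or_ne n 1 with h | h
    · subst h; norm_num; ring
    · simp only [if_neg h, if_neg (Ne.symm h)]; ring

lemma S1_sum (m : ℕ) :
    ∑ n ∈ Finset.range (m + 1), _root_.bernoulli n * S1 m n = L (P m) := by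
  rw [L, Polynomial.sum_over_range' _ (fun n => by simp) (m + 1)]
  · exact Finset.sum_congr rfl fun n _ => by rw [coeff_P]
  · refine Nat.lt_succ_of_le (Polynomial.natDegree_le_iff_coeff_eq_zero.mpr fun n hn => ?_)
    rw [coeff_P]
    exact S1_eq_zero m n hn

lemma P_comp (m : ℕ) : (P (m + 1)).comp (X + 1) = (X + 1) * P m := by
  rw [P, Polynomial.prod_comp, Finset.prod_range_succ']
  have h0 : (X - C ((0:ℕ):ℚ)).comp (X + 1) = X + 1 := by simp
  rw [h0, mul_comm, P]
  congr 1
  refine Finset.prod_congr rfl fun i _ => ?_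
  rw [sub_comp, X_comp, C_comp]
  push_cast
  rw [C_add, C_1]
  ring

end

theorem stmt_5 (m : ℕ) :
    ∑ n ∈ Finset.range (m + 1), bernoulli n * S1 m n =
      (-1 : ℚ) ^ m * (Nat.factorial m : ℚ) / (m + 1) := by
  have hL1 : L (P (m + 1)) + (m : ℚ) * L (P m) = L (Polynomial.X * P m) := by
    rw [← L_C_mul, ← L_add, P_succ]
    congr 1
    ring
  have h1 := L_comp (P (m + 1))
  rw [P_comp] at h1
  have h2 : (Polynomial.X + 1) * P m = Polynomial.X * P m + P m := by ring
  rw [h2, L_add] at h1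
  have hc : (P (m + 1)).coeff 1 = (-1) ^ m * (Nat.factorial m : ℚ) := by
    rw [coeff_P, S1_succ_one]
  rw [hc] at h1
  have key : ((m : ℚ) + 1) * L (P m) = (-1) ^ m * (Nat.factorial m : ℚ) := by
    linarith [hL1, h1]
  rw [S1_sum m]
  have hm : (m : ℚ) + 1 ≠ 0 := by positivity
  field_simp
  linarith [key]
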